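/- arXiv:1306.0922 — 3 statements merged into one kernel-verified Lean document; each statement's English description precedes it below -/
import Mathlib

section
/- Let f : ℝ × ℂ^p × ℂ^p → ℂ^p be bounded, continuous, almost automorphic uniformly on compact subsets of ℂ^p × ℂ^p, and uniformly continuous on compact subsets of ℂ^p × ℂ^p uniformly in t ∈ ℝ. If ψ : ℝ → ℂ^p is almost automorphic (in Bochner's sense), then the function t ↦ f(t, ψ(t), ψ(⌊t⌋)) is Z-almost automorphic. -/
open MeasureTheory Filter Topology

/-- Bounded, piecewise continuous: continuous on ℝ ∖ ℤ with finite one-sided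
limits at every integer. -/
def BddPC (p : ℕ) (f : ℝ → Fin p → ℂ) : Prop :=
  (∃ C : ℝ, ∀ t : ℝ, ‖f t‖ ≤ C) ∧
  ContinuousOn f {t : ℝ | ∀ n : ℤ, t ≠ (n : ℝ)} ∧
  ∀ n : ℤ, (∃ L : Fin p → ℂ, Tendsto f (𝓝[<] (n : ℝ)) (𝓝 L)) ∧
           (∃ R : Fin p → ℂ, Tendsto f (𝓝[>] (n : ℝ)) (𝓝 R))

/-- `ℤ`-almost automorphic functions. -/
def ZAlmostAutomorphic (p : ℕ) (f : ℝ → Fin p → ℂ) : Prop :=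
  BddPC p f ∧
  ∀ s : ℕ → ℤ, ∃ (φ : ℕ → ℕ) (g : ℝ → Fin p → ℂ), StrictMono φ ∧
    (∀ t : ℝ, Tendsto (fun n => f (t + (s (φ n) : ℝ))) atTop (𝓝 (g t))) ∧
    (∀ t : ℝ, Tendsto (fun n => g (t - (s (φ n) : ℝ))) atTop (𝓝 (f t)))

/-- Almost automorphic functions in the sense of Bochner. -/
def AlmostAutomorphic (p : ℕ) (f : ℝ → Fin p → ℂ) : Prop :=
  (∃ C : ℝ, ∀ t : ℝ, ‖f t‖ ≤ C) ∧ Continuous f ∧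
  ∀ s : ℕ → ℝ, ∃ (φ : ℕ → ℕ) (g : ℝ → Fin p → ℂ), StrictMono φ ∧
    (∀ t : ℝ, Tendsto (fun n => f (t + s (φ n))) atTop (𝓝 (g t))) ∧
    (∀ t : ℝ, Tendsto (fun n => g (t - s (φ n))) atTop (𝓝 (f t)))

/-- Almost automorphy, uniformly on compact subsets of `ℂ^p × ℂ^p`, for a function
`f : ℝ × ℂ^p × ℂ^p → ℂ^p`. -/
def AAUniformOnCompact2 (p : ℕ) (f : ℝ → (Fin p → ℂ) → (Fin p → ℂ) → Fin p → ℂ) : Prop :=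
  ∀ K : Set ((Fin p → ℂ) × (Fin p → ℂ)), IsCompact K → ∀ s : ℕ → ℝ,
    ∃ (φ : ℕ → ℕ) (g : ℝ → (Fin p → ℂ) → (Fin p → ℂ) → Fin p → ℂ), StrictMono φ ∧
      (∀ t : ℝ, ∀ z ∈ K, Tendsto (fun n => f (t + s (φ n)) z.1 z.2) atTop (𝓝 (g t z.1 z.2))) ∧
      (∀ t : ℝ, ∀ z ∈ K, Tendsto (fun n => g (t - s (φ n)) z.1 z.2) atTop (𝓝 (f t z.1 z.2)))

/-!
An integer shift `k` commutes with the floor, `⌊t + k⌋ = ⌊t⌋ + k`, so along integer sequences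
both state arguments `ψ t` and `ψ ⌊t⌋` are translated exactly like the time argument, and
Bochner's two limit relations for `ψ` and for `f` can be combined. They can be taken jointly
because `f (t, ·, ·)` is equicontinuous in `t` on the compact set `B × B`, `B` a closed ball
containing the ranges of `ψ` and of its limit function; this equicontinuity passes to the limit
function of `f`, which handles the return limit. Piecewise continuity holds since the floor is
locally constant off `ℤ` and one-sidedly constant at each integer.
-/

lemma tendsto_floor_nhds_pure_of_forall_ne {t : ℝ} (ht : ∀ n : ℤ, t ≠ n) :
    Tendsto (Int.floor : ℝ → ℤ) (𝓝 t) (pure ⌊t⌋) := by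
  have hceil : ⌈t⌉ - 1 = ⌊t⌋ := by
    have := (Int.ceil_eq_floor_add_one_iff_notMem t).mpr (by rintro ⟨n, rfl⟩; exact ht n rfl)
    omega
  rw [← nhdsLT_sup_nhdsGE, tendsto_sup]
  exact ⟨hceil ▸ tendsto_floor_left_pure_ceil_sub_one t, tendsto_floor_right_pure_floor t⟩

lemma tendsto_comp_floor {X : Type*} [TopologicalSpace X] {F : ℝ → ℤ → X} {l : Filter ℝ}
    {t₀ : ℝ} {m : ℤ} (hl : l ≤ 𝓝 t₀) (hm : Tendsto Int.floor l (pure m))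
    (hF : ContinuousAt (F · m) t₀) :
    Tendsto (fun t => F t ⌊t⌋) l (𝓝 (F t₀ m)) :=
  (hF.tendsto.mono_left hl).congr' <| (tendsto_pure.mp hm).mono fun t ht => congrArg (F t) ht.symm

lemma bddPC_comp_floor {p : ℕ} {F : ℝ → ℤ → Fin p → ℂ} (hbdd : ∃ C, ∀ t m, ‖F t m‖ ≤ C)
    (hF : ∀ m, Continuous (F · m)) : BddPC p (fun t => F t ⌊t⌋) := by
  obtain ⟨C, hC⟩ := hbdd
  refine ⟨⟨C, fun t => hC _ _⟩, fun t ht => ?_, fun n => ⟨?_, ?_⟩⟩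
  · exact (tendsto_comp_floor le_rfl (tendsto_floor_nhds_pure_of_forall_ne ht)
      (hF _).continuousAt).mono_left nhdsWithin_le_nhds
  · exact ⟨_, tendsto_comp_floor nhdsWithin_le_nhds (tendsto_floor_left_pure_sub_one n)
      (hF _).continuousAt⟩
  · exact ⟨_, tendsto_comp_floor nhdsWithin_le_nhds
      ((tendsto_floor_right_pure n).mono_left (nhdsWithin_mono _ Set.Ioi_subset_Ici_self))
      (hF _).continuousAt⟩

section Equicontinuity

variable {ι κ α β : Type*}

lemma uniformEquicontinuousOn_of_dist [PseudoMetricSpace α] [PseudoMetricSpace β]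
    {F : ι → β → α} {S : Set β}
    (h : ∀ ε > 0, ∃ δ > 0, ∀ i, ∀ x ∈ S, ∀ y ∈ S, dist x y < δ → dist (F i x) (F i y) < ε) :
    UniformEquicontinuousOn F S := by
  rw [(Metric.uniformity_basis_dist.inf_principal _).uniformEquicontinuousOn_iff
    Metric.uniformity_basis_dist]
  intro ε hε
  obtain ⟨δ, hδ, h⟩ := h ε hε
  exact ⟨δ, hδ, fun x y hxy i => h i x hxy.2.1 y hxy.2.2 hxy.1⟩

variable [UniformSpace α]

lemma UniformEquicontinuousOn.of_tendsto [UniformSpace β] {F : ι → β → α} {G : κ → β → α}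
    {S : Set β} (hF : UniformEquicontinuousOn F S)
    (hG : ∀ k, ∃ u : ℕ → ι, ∀ x ∈ S, Tendsto (fun n => F (u n) x) atTop (𝓝 (G k x))) :
    UniformEquicontinuousOn G S := by
  intro U hU
  obtain ⟨V, hV, hVclosed, hVU⟩ := mem_uniformity_isClosed hU
  filter_upwards [hF V hV, mem_inf_of_right (mem_principal_self _)]
  rintro ⟨x, y⟩ hxy ⟨hxS, hyS⟩ k
  obtain ⟨u, hu⟩ := hG k
  exact hVU <| hVclosed.mem_of_tendsto ((hu x hxS).prodMk_nhds (hu y hyS)) <|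
    Eventually.of_forall fun n => hxy (u n)

lemma EquicontinuousWithinAt.tendsto_apply [TopologicalSpace β] {F : ι → β → α} {S : Set β}
    {x₀ : β} (hF : EquicontinuousWithinAt F S x₀) {l : Filter ι} {z : ι → β} {L : α}
    (hz : Tendsto z l (𝓝 x₀)) (hzS : ∀ᶠ i in l, z i ∈ S) (hL : Tendsto (F · x₀) l (𝓝 L)) :
    Tendsto (fun i => F i (z i)) l (𝓝 L) := by
  refine hL.congr_uniformity fun U hU => ?_
  have hz' : Tendsto z l (𝓝[S] x₀) := tendsto_nhdsWithin_iff.mpr ⟨hz, hzS⟩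
  exact (hz'.eventually (hF U hU)).mono fun i hi => hi i

end Equicontinuity

lemma tendsto_superposition_floor_shift {X E : Type*} [TopologicalSpace X] [UniformSpace E]
    {F G : ℝ → X → X → E} {B : Set X}
    (hF : EquicontinuousOn (fun t (z : X × X) => F t z.1 z.2) (B ×ˢ B))
    {u v : ℝ → X} (hu : ∀ t, u t ∈ B) (hv : ∀ t, v t ∈ B) {τ : ℕ → ℤ}
    (huv : ∀ t, Tendsto (fun n => u (t + τ n)) atTop (𝓝 (v t)))
    (hFG : ∀ t, ∀ z ∈ B ×ˢ B, Tendsto (fun n => F (t + τ n) z.1 z.2) atTop (𝓝 (G t z.1 z.2)))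
    (t : ℝ) :
    Tendsto (fun n => F (t + τ n) (u (t + τ n)) (u ⌊t + τ n⌋)) atTop (𝓝 (G t (v t) (v ⌊t⌋))) := by
  have hz : (v t, v ⌊t⌋) ∈ B ×ˢ B := ⟨hv _, hv _⟩
  have := ((hF _ hz).comp fun n => t + τ n).tendsto_apply
    ((huv t).prodMk_nhds (huv ⌊t⌋)) (Eventually.of_forall fun n => ⟨hu _, hu _⟩) (hFG t _ hz)
  simpa only [Int.floor_add_intCast, Int.cast_add, Function.comp_apply] using this

/-- If `f : ℝ × ℂ^p × ℂ^p → ℂ^p` is bounded, continuous, almost automorphic uniformly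
on compact subsets of `ℂ^p × ℂ^p`, uniformly continuous on compact subsets of
`ℂ^p × ℂ^p` uniformly in `t ∈ ℝ`, and `ψ` is almost automorphic (in Bochner's sense),
then `t ↦ f (t, ψ(t), ψ(⌊t⌋))` is `ℤ`-almost automorphic. -/
theorem zAlmostAutomorphic_superposition_floor {p : ℕ}
    (f : ℝ → (Fin p → ℂ) → (Fin p → ℂ) → Fin p → ℂ)
    (hbdd : ∃ C : ℝ, ∀ (t : ℝ) (x y : Fin p → ℂ), ‖f t x y‖ ≤ C)
    (hcont : Continuous fun q : ℝ × (Fin p → ℂ) × (Fin p → ℂ) => f q.1 q.2.1 q.2.2)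
    (haa : AAUniformOnCompact2 p f)
    (huc : ∀ K : Set ((Fin p → ℂ) × (Fin p → ℂ)), IsCompact K →
      ∀ ε > (0 : ℝ), ∃ δ > (0 : ℝ), ∀ t : ℝ, ∀ z ∈ K, ∀ w ∈ K,
        ‖z - w‖ < δ → ‖f t z.1 z.2 - f t w.1 w.2‖ < ε)
    (ψ : ℝ → Fin p → ℂ) (hψ : AlmostAutomorphic p ψ) :
    ZAlmostAutomorphic p (fun t : ℝ => f t (ψ t) (ψ ((⌊t⌋ : ℤ) : ℝ))) := by
  obtain ⟨⟨C, hC⟩, hψc, hψaa⟩ := hψ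
  obtain ⟨D, hD⟩ := hbdd
  refine ⟨bddPC_comp_floor (F := fun t m => f t (ψ t) (ψ m)) ⟨D, fun t m => hD _ _ _⟩
    fun m => hcont.comp (continuous_id.prodMk (hψc.prodMk continuous_const)), fun s => ?_⟩
  set B := Metric.closedBall (0 : Fin p → ℂ) C
  have hK : IsCompact (B ×ˢ B) := (isCompact_closedBall _ _).prod (isCompact_closedBall _ _)
  have hUE : UniformEquicontinuousOn (fun t (z : _ × _) => f t z.1 z.2) (B ×ˢ B) :=
    uniformEquicontinuousOn_of_dist (by simpa only [dist_eq_norm] using huc _ hK)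
  obtain ⟨φ₁, gψ, hφ₁, hψ_gψ, hgψ_ψ⟩ := hψaa fun n => s n
  obtain ⟨φ₂, g, hφ₂, hf_g, hg_f⟩ := haa _ hK fun n => s (φ₁ n)
  have hψB : ∀ t, ψ t ∈ B := fun t => mem_closedBall_zero_iff.mpr (hC t)
  have hgψB : ∀ t, gψ t ∈ B := fun t => Metric.isClosed_closedBall.mem_of_tendsto
    (hψ_gψ t) (Eventually.of_forall fun _ => hψB _)
  have hgUE : UniformEquicontinuousOn (fun t (z : _ × _) => g t z.1 z.2) (B ×ˢ B) :=
    hUE.of_tendsto fun t => ⟨_, hf_g t⟩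
  have hφ₂_atTop := hφ₂.tendsto_atTop
  refine ⟨φ₁ ∘ φ₂, fun t => g t (gψ t) (gψ ⌊t⌋), hφ₁.comp hφ₂, fun t => ?_, fun t => ?_⟩
  · exact tendsto_superposition_floor_shift hUE.equicontinuousOn hψB hgψB
      (fun t => (hψ_gψ t).comp hφ₂_atTop) hf_g t
  -- the return limit is the forward one for `g` along the shifts `-s`, with `ψ` and `gψ` swapped
  · have hgψ_ψ' : ∀ t, Tendsto (fun n => gψ (t + ((-s (φ₁ (φ₂ n)) : ℤ) : ℝ))) atTop (𝓝 (ψ t)) :=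
      fun t => by
        simpa only [Int.cast_neg, ← sub_eq_add_neg, Function.comp_def] using (hgψ_ψ t).comp hφ₂_atTop
    simpa only [Int.cast_neg, ← sub_eq_add_neg, Function.comp_apply] using
      tendsto_superposition_floor_shift hgUE.equicontinuousOn hgψB hψB hgψ_ψ'
        (fun t z hz => by simpa only [Int.cast_neg, ← sub_eq_add_neg] using hg_f t z hz) t
end

section
/- Let A ∈ M_{p×p}(ℝ) be a constant matrix. If f : ℝ → ℂ^p is Z-almost automorphic, then the function (Υf)(t) = ∫_{⌊t⌋}^{t} e^{A(t−s)} f(s) ds, where ⌊·⌋ is the greatest integer function and e^{A} denotes the matrix exponential, is Z-almost automorphic. -/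
/-!
Write `K u = e^{Au}`. Since `⌊t + m⌋ = ⌊t⌋ + m` for `m ∈ ℤ`, `Υ` commutes with integer
translations, and the integral runs over an interval of length at most one on which `K(t - s)`
is uniformly bounded. Dominated convergence therefore carries the pointwise limits
`f(· + sₙ) → g` and `g(· - sₙ) → f` over to `Υf(· + sₙ) → Υg` and `Υg(· - sₙ) → Υf`.
Piecewise continuity comes from the semigroup law `K(t - s) = K t K(-s)`: on `[n, n + 1)`,
`Υf t = K t ∫ₙᵗ K(-s) f(s) ds`, a continuous function of `t` on all of `ℝ`.
-/

open MeasureTheory Filter Topology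

open Set intervalIntegral
open scoped Interval
open TopologicalSpace

theorem ContinuousOn.aestronglyMeasurable_of_countable_compl {β : Type*} [TopologicalSpace β]
    [PseudoMetrizableSpace β] {μ : Measure ℝ} [NullSingletonClass μ] {f : ℝ → β} {s : Set ℝ}
    (hf : ContinuousOn f s) (hs : sᶜ.Countable) : AEStronglyMeasurable f μ := by
  have hae : ∀ᵐ x ∂μ, x ∈ s := hs.measure_zero μ
  simpa [Measure.restrict_eq_self_of_ae_mem hae] using
    hf.aestronglyMeasurable (μ := μ) hs.measurableSet.of_compl

section Kernel

variable {E : Type*} [NormedAddCommGroup E] [NormedSpace ℝ E]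
  {K : ℝ → E →L[ℝ] E} {v w : ℝ → E} {C : ℝ}

theorem aestronglyMeasurable_clm_apply {μ : Measure ℝ} (hK : Continuous K)
    (hv : AEStronglyMeasurable v μ) : AEStronglyMeasurable (fun s => K s (v s)) μ :=
  Continuous.comp_aestronglyMeasurable₂ (g := fun (L : E →L[ℝ] E) x => L x) (by fun_prop)
    hK.aestronglyMeasurable hv

theorem intervalIntegrable_clm_apply_of_bounded (hK : Continuous K)
    (hv : AEStronglyMeasurable v volume) (hC : ∀ s, ‖v s‖ ≤ C) (a b : ℝ) :
    IntervalIntegrable (fun s => K s (v s)) volume a b := by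
  obtain ⟨M, hM⟩ :=
    (isCompact_uIcc (a := a) (b := b)).exists_bound_of_continuousOn hK.continuousOn
  rw [intervalIntegrable_iff]
  refine IntegrableOn.of_bound measure_Ioc_lt_top
    (aestronglyMeasurable_clm_apply hK hv).restrict (M * C) ?_
  refine ae_restrict_of_forall_mem measurableSet_uIoc fun s hs => ?_
  have hKs := hM s (uIoc_subset_uIcc hs)
  exact (K s).le_opNorm_of_le (hC s) |>.trans
    (mul_le_mul_of_nonneg_right hKs ((norm_nonneg _).trans (hC s)))

noncomputable def upsilon (K : ℝ → E →L[ℝ] E) (v : ℝ → E) (t : ℝ) : E :=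
  ∫ s in ((⌊t⌋ : ℤ) : ℝ)..t, K (t - s) (v s)

theorem sub_mem_Icc_of_mem_uIoc_floor {t s : ℝ} (hs : s ∈ Ι ((⌊t⌋ : ℤ) : ℝ) t) :
    t - s ∈ Icc (0 : ℝ) 1 := by
  rw [uIoc_of_le (Int.floor_le t)] at hs
  constructor <;> linarith [hs.1, hs.2, Int.sub_one_lt_floor t]

theorem norm_apply_sub_le_of_mem_uIoc_floor {M : ℝ} (hM : ∀ u ∈ Icc (0 : ℝ) 1, ‖K u‖ ≤ M)
    (hC : ∀ s, ‖v s‖ ≤ C) {t s : ℝ} (hs : s ∈ Ι ((⌊t⌋ : ℤ) : ℝ) t) :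
    ‖K (t - s) (v s)‖ ≤ M * C :=
  (K _).le_opNorm_of_le (hC s) |>.trans <|
    mul_le_mul_of_nonneg_right (hM _ (sub_mem_Icc_of_mem_uIoc_floor hs))
      ((norm_nonneg _).trans (hC s))

theorem norm_upsilon_le {M : ℝ} (hM : ∀ u ∈ Icc (0 : ℝ) 1, ‖K u‖ ≤ M)
    (hC : ∀ s, ‖v s‖ ≤ C) (t : ℝ) : ‖upsilon K v t‖ ≤ M * C := by
  have hMC : 0 ≤ M * C := mul_nonneg ((norm_nonneg _).trans (hM 0 (by simp)))
    ((norm_nonneg _).trans (hC 0))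
  have hlen : |t - ((⌊t⌋ : ℤ) : ℝ)| ≤ 1 := by
    rw [abs_of_nonneg (by linarith [Int.floor_le t])]
    linarith [Int.sub_one_lt_floor t]
  calc ‖upsilon K v t‖ ≤ M * C * |t - ((⌊t⌋ : ℤ) : ℝ)| :=
        norm_integral_le_of_norm_le_const fun s hs => norm_apply_sub_le_of_mem_uIoc_floor hM hC hs
    _ ≤ M * C := mul_le_of_le_one_right hMC hlen

theorem tendsto_upsilon (hK : Continuous K) {v : ℕ → ℝ → E}
    (hv : ∀ n, AEStronglyMeasurable (v n) volume) (hC : ∀ n s, ‖v n s‖ ≤ C)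
    (hlim : ∀ s, Tendsto (fun n => v n s) atTop (𝓝 (w s))) (t : ℝ) :
    Tendsto (fun n => upsilon K (v n) t) atTop (𝓝 (upsilon K w t)) := by
  obtain ⟨M, hM⟩ := (isCompact_Icc (a := (0 : ℝ)) (b := 1)).exists_bound_of_continuousOn
    hK.continuousOn
  have hKt : Continuous fun s => K (t - s) := hK.comp (continuous_const.sub continuous_id)
  refine tendsto_integral_filter_of_dominated_convergence (fun _ => M * C)
    (Eventually.of_forall fun n => (aestronglyMeasurable_clm_apply hKt (hv n)).restrict)
    (Eventually.of_forall fun n => ae_of_all _ fun s hs =>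
      norm_apply_sub_le_of_mem_uIoc_floor hM (hC n) hs)
    intervalIntegrable_const (ae_of_all _ fun s _ => ?_)
  exact ((K (t - s)).continuous.tendsto _).comp (hlim s)

theorem upsilon_add_intCast (v : ℝ → E) (t : ℝ) (m : ℤ) :
    upsilon K v (t + m) = upsilon K (fun s => v (s + m)) t := by
  rw [upsilon, upsilon, Int.floor_add_intCast, Int.cast_add,
    ← integral_comp_add_right (fun s => K (t + m - s) (v s))]
  simp only [add_sub_add_right_eq_sub]

theorem upsilon_sub_intCast (v : ℝ → E) (t : ℝ) (m : ℤ) :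
    upsilon K v (t - m) = upsilon K (fun s => v (s - m)) t := by
  simpa [sub_eq_add_neg] using upsilon_add_intCast (K := K) v t (-m)

theorem upsilon_eq_apply_integral [CompleteSpace E] (hK : Continuous K)
    (hK_add : ∀ a b, K (a + b) = K a * K b) (hv : AEStronglyMeasurable v volume)
    (hC : ∀ s, ‖v s‖ ≤ C) (t : ℝ) :
    upsilon K v t = K t (∫ s in ((⌊t⌋ : ℤ) : ℝ)..t, K (-s) (v s)) := by
  have hsplit : ∀ s, K (t - s) (v s) = K t (K (-s) (v s)) := fun s => by
    rw [sub_eq_add_neg, hK_add]; rfl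
  simp only [upsilon, hsplit]
  exact (K t).intervalIntegral_comp_comm
    (intervalIntegrable_clm_apply_of_bounded (hK.comp continuous_neg) hv hC _ _)

end Kernel

section FinDim

variable {p : ℕ}

theorem bddPC_of_eqOn_Ico {F : ℝ → Fin p → ℂ} (hb : ∃ C, ∀ t, ‖F t‖ ≤ C)
    (hF : ∀ n : ℤ, ∃ H : ℝ → Fin p → ℂ, Continuous H ∧ EqOn F H (Ico n (n + 1))) :
    BddPC p F := by
  choose H hH hFH using hF
  refine ⟨hb, fun t ht => ?_, fun n => ⟨⟨H (n - 1) n, ?_⟩, ⟨H n n, ?_⟩⟩⟩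
  · have hlt : ((⌊t⌋ : ℤ) : ℝ) < t := (Int.floor_le t).lt_of_ne fun h => ht _ h.symm
    have hnear : H ⌊t⌋ =ᶠ[𝓝 t] F := by
      filter_upwards [Ioo_mem_nhds hlt (Int.lt_floor_add_one t)] with x hx
      exact (hFH _ (Ioo_subset_Ico_self hx)).symm
    exact ((hH _).continuousAt.congr hnear).continuousWithinAt
  · have hnear : H (n - 1) =ᶠ[𝓝[<] (n : ℝ)] F := by
      filter_upwards [Ioo_mem_nhdsLT (show ((n - 1 : ℤ) : ℝ) < n by push_cast; linarith)]
        with x hx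
      exact (hFH _ ⟨hx.1.le, by push_cast at hx ⊢; linarith [hx.2]⟩).symm
    exact ((hH _).continuousAt.tendsto.mono_left nhdsWithin_le_nhds).congr' hnear
  · have hnear : H n =ᶠ[𝓝[>] (n : ℝ)] F := by
      filter_upwards [Ioo_mem_nhdsGT (show (n : ℝ) < n + 1 by linarith)] with x hx
      exact (hFH _ (Ioo_subset_Ico_self hx)).symm
    exact ((hH _).continuousAt.tendsto.mono_left nhdsWithin_le_nhds).congr' hnear

variable {K : ℝ → (Fin p → ℂ) →L[ℝ] (Fin p → ℂ)}

theorem bddPC_upsilon (hK : Continuous K) (hK_add : ∀ a b, K (a + b) = K a * K b)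
    {v : ℝ → Fin p → ℂ} {C : ℝ} (hv : AEStronglyMeasurable v volume) (hC : ∀ s, ‖v s‖ ≤ C) :
    BddPC p (upsilon K v) := by
  obtain ⟨M, hM⟩ := (isCompact_Icc (a := (0 : ℝ)) (b := 1)).exists_bound_of_continuousOn
    hK.continuousOn
  refine bddPC_of_eqOn_Ico ⟨M * C, norm_upsilon_le hM hC⟩ fun n => ?_
  refine ⟨fun t => K t (∫ s in (n : ℝ)..t, K (-s) (v s)), ?_, fun t ht => ?_⟩
  · exact hK.clm_apply (continuous_primitive
      (intervalIntegrable_clm_apply_of_bounded (hK.comp continuous_neg) hv hC) _)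
  · have hfloor : ⌊t⌋ = n := Int.floor_eq_iff.mpr ht
    rw [upsilon_eq_apply_integral hK hK_add hv hC, hfloor]

theorem zAlmostAutomorphic_upsilon (hK : Continuous K) (hK_add : ∀ a b, K (a + b) = K a * K b)
    {f : ℝ → Fin p → ℂ} (hf : ZAlmostAutomorphic p f) : ZAlmostAutomorphic p (upsilon K f) := by
  obtain ⟨C, hC⟩ := hf.1.1
  have hmf : AEStronglyMeasurable f volume :=
    hf.1.2.1.aestronglyMeasurable_of_countable_compl
      ((countable_range ((↑) : ℤ → ℝ)).mono fun t ht => by simpa [eq_comm] using ht)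
  refine ⟨bddPC_upsilon hK hK_add hmf hC, fun s => ?_⟩
  obtain ⟨φ, g, hφ, hfg, hgf⟩ := hf.2 s
  have hgC : ∀ t, ‖g t‖ ≤ C := fun t =>
    le_of_tendsto (hfg t).norm (Eventually.of_forall fun _ => hC _)
  have hmf_add : ∀ c : ℝ, AEStronglyMeasurable (fun x => f (x + c)) volume := fun c =>
    hmf.comp_measurePreserving (measurePreserving_add_right volume c)
  have hmg : AEStronglyMeasurable g volume :=
    aestronglyMeasurable_of_tendsto_ae atTop (fun n => hmf_add _) (ae_of_all _ hfg)
  refine ⟨φ, upsilon K g, hφ, fun t => ?_, fun t => ?_⟩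
  · simp only [upsilon_add_intCast]
    exact tendsto_upsilon hK (fun n => hmf_add _) (fun n s => hC _) hfg t
  · simp only [upsilon_sub_intCast]
    exact tendsto_upsilon hK
      (fun n => hmg.comp_measurePreserving (measurePreserving_sub_right volume _))
      (fun n s => hgC _) hgf t

end FinDim

section MatrixExp

variable {p : ℕ} (A : Matrix (Fin p) (Fin p) ℝ)

section
attribute [local instance] Matrix.linftyOpNormedRing Matrix.linftyOpNormedAlgebra

theorem Matrix.continuous_exp_smul : Continuous fun u : ℝ => NormedSpace.exp (u • A) :=
  NormedSpace.exp_continuous.comp (continuous_id.smul continuous_const)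

end

noncomputable def matrixExpKernel (u : ℝ) : (Fin p → ℂ) →L[ℝ] (Fin p → ℂ) :=
  LinearMap.toContinuousLinearMap
    ((Matrix.toLin' ((NormedSpace.exp (u • A)).map ((↑) : ℝ → ℂ))).restrictScalars ℝ)

theorem continuous_matrixExpKernel : Continuous (matrixExpKernel A) :=
  continuous_clm_apply.mpr fun _ =>
    (((Matrix.continuous_exp_smul A).matrix_map Complex.continuous_ofReal).matrix_mulVec
      continuous_const)

theorem matrixExpKernel_add (a b : ℝ) :
    matrixExpKernel A (a + b) = matrixExpKernel A a * matrixExpKernel A b := by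
  have hcomm : Commute (a • A) (b • A) := ((Commute.refl A).smul_left a).smul_right b
  ext y : 1
  change ((NormedSpace.exp ((a + b) • A)).map Complex.ofRealHom).mulVec y =
    ((NormedSpace.exp (a • A)).map Complex.ofRealHom).mulVec
      (((NormedSpace.exp (b • A)).map Complex.ofRealHom).mulVec y)
  rw [Matrix.mulVec_mulVec, add_smul, Matrix.exp_add_of_commute _ _ hcomm, Matrix.map_mul]

end MatrixExp

/-- If `A ∈ M_{p×p}(ℝ)` is a constant matrix and `f` is `ℤ`-almost automorphic, then
`(Υf)(t) = ∫_{⌊t⌋}^{t} e^{A(t-s)} f(s) ds` is `ℤ`-almost automorphic. -/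
theorem upsilon_zAlmostAutomorphic {p : ℕ}
    (A : Matrix (Fin p) (Fin p) ℝ)
    (f : ℝ → Fin p → ℂ) (hf : ZAlmostAutomorphic p f) :
    ZAlmostAutomorphic p
      (fun t : ℝ => ∫ s in ((⌊t⌋ : ℤ) : ℝ)..t,
        (fun i : Fin p =>
          ∑ j : Fin p, ((NormedSpace.exp ((t - s) • A) i j : ℝ) : ℂ) * f s j)) :=
  -- the integrand is `matrixExpKernel A (t - s) (f s)` unfolded
  zAlmostAutomorphic_upsilon (continuous_matrixExpKernel A) (matrixExpKernel_add A) hf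
end

section
/- Let α ∈ ℂ with Re(α) > 0 and let f : ℝ → ℂ be Z-almost automorphic. Then x₂(t) = −∫_{t}^{+∞} e^{α(t−s)} f(s) ds is well defined and is the unique almost automorphic solution of the scalar equation x'(t) = α x(t) + f(t), i.e. the unique almost automorphic function x satisfying x(t) = x(s) + ∫_s^t (α x(u) + f(u)) du for all s ≤ t. -/
open MeasureTheory Filter Topology

/-- Bounded, piecewise continuous scalar function: continuous on ℝ ∖ ℤ with finite
one-sided limits at every integer. -/
def BddPCc (f : ℝ → ℂ) : Prop :=
  (∃ C : ℝ, ∀ t : ℝ, ‖f t‖ ≤ C) ∧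
  ContinuousOn f {t : ℝ | ∀ n : ℤ, t ≠ (n : ℝ)} ∧
  ∀ n : ℤ, (∃ L : ℂ, Tendsto f (𝓝[<] (n : ℝ)) (𝓝 L)) ∧
           (∃ R : ℂ, Tendsto f (𝓝[>] (n : ℝ)) (𝓝 R))

/-- `ℤ`-almost automorphic scalar functions. -/
def ZAlmostAutomorphicC (f : ℝ → ℂ) : Prop :=
  BddPCc f ∧
  ∀ s : ℕ → ℤ, ∃ (φ : ℕ → ℕ) (g : ℝ → ℂ), StrictMono φ ∧
    (∀ t : ℝ, Tendsto (fun n => f (t + (s (φ n) : ℝ))) atTop (𝓝 (g t))) ∧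
    (∀ t : ℝ, Tendsto (fun n => g (t - (s (φ n) : ℝ))) atTop (𝓝 (f t)))

/-- Almost automorphic scalar functions in the sense of Bochner. -/
def AlmostAutomorphicC (f : ℝ → ℂ) : Prop :=
  (∃ C : ℝ, ∀ t : ℝ, ‖f t‖ ≤ C) ∧ Continuous f ∧
  ∀ s : ℕ → ℝ, ∃ (φ : ℕ → ℕ) (g : ℝ → ℂ), StrictMono φ ∧
    (∀ t : ℝ, Tendsto (fun n => f (t + s (φ n))) atTop (𝓝 (g t))) ∧
    (∀ t : ℝ, Tendsto (fun n => g (t - s (φ n))) atTop (𝓝 (f t)))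

/-!
Writing `x₂(t) = -e^{αt} ∫_t^∞ e^{-αs} f(s) ds` shows that `x₂` is bounded by `sup ‖f‖ / Re α`,
continuous, and differentiable with `x₂' = α x₂ + f` away from the integers, hence a solution
of the integrated equation and Lipschitz. Translating `f` by integers translates `x₂`, and
dominated convergence carries the `ℤ`-almost automorphy of `f` over to `x₂`; for a Lipschitz
function, real translations `sₙ = ⌊sₙ⌋ + {sₙ}` reduce to integer ones after extracting a
convergent subsequence of the fractional parts. Finally the difference of two bounded solutions
is a bounded multiple of `e^{αt}`, hence zero because `Re α > 0`.
-/

/-- The function `x₂` of the theorem. -/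
noncomputable def expConvIoi (α : ℂ) (f : ℝ → ℂ) (t : ℝ) : ℂ :=
  -∫ s in Set.Ioi t, Complex.exp (α * (t - s)) * f s

section ExpConvIoi

variable {α : ℂ} {f : ℝ → ℂ} {C : ℝ}

lemma exp_mul_sub_eq_mul (a t s : ℝ) :
    Real.exp (a * (t - s)) = Real.exp (a * t) * Real.exp (-a * s) := by
  rw [← Real.exp_add]; ring_nf

lemma integrableOn_exp_mul_sub_Ioi {a : ℝ} (ha : 0 < a) (t : ℝ) :
    IntegrableOn (fun s : ℝ => Real.exp (a * (t - s))) (Set.Ioi t) := by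
  simp_rw [exp_mul_sub_eq_mul a t]
  exact (exp_neg_integrableOn_Ioi t ha).const_mul _

lemma integral_exp_mul_sub_Ioi {a : ℝ} (ha : 0 < a) (t : ℝ) :
    ∫ s in Set.Ioi t, Real.exp (a * (t - s)) = a⁻¹ := by
  simp_rw [exp_mul_sub_eq_mul a t]
  rw [integral_const_mul, integral_exp_mul_Ioi (neg_lt_zero.2 ha), neg_div_neg_eq,
    ← mul_div_assoc, ← Real.exp_add]
  simp

lemma norm_cexp_mul_sub_mul_le (hb : ∀ t, ‖f t‖ ≤ C) (t s : ℝ) :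
    ‖Complex.exp (α * (t - s)) * f s‖ ≤ C * Real.exp (α.re * (t - s)) := by
  rw [norm_mul, Complex.norm_exp, ← Complex.ofReal_sub, Complex.re_mul_ofReal, mul_comm]
  gcongr
  exact hb s

lemma aestronglyMeasurable_cexp_mul_sub_mul (hm : AEStronglyMeasurable f) (t : ℝ) :
    AEStronglyMeasurable (fun s : ℝ => Complex.exp (α * (t - s)) * f s) := by
  fun_prop

lemma integrableOn_cexp_mul_sub_mul_Ioi (hα : 0 < α.re) (hm : AEStronglyMeasurable f)
    (hb : ∀ t, ‖f t‖ ≤ C) (t : ℝ) :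
    IntegrableOn (fun s : ℝ => Complex.exp (α * (t - s)) * f s) (Set.Ioi t) :=
  ((integrableOn_exp_mul_sub_Ioi hα t).const_mul C).mono'
    (aestronglyMeasurable_cexp_mul_sub_mul hm t).restrict
    (ae_of_all _ (norm_cexp_mul_sub_mul_le hb t))

lemma norm_expConvIoi_le (hα : 0 < α.re) (hb : ∀ t, ‖f t‖ ≤ C) (t : ℝ) :
    ‖expConvIoi α f t‖ ≤ C / α.re :=
  calc ‖expConvIoi α f t‖ = ‖∫ s in Set.Ioi t, Complex.exp (α * (t - s)) * f s‖ := norm_neg _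
    _ ≤ ∫ s in Set.Ioi t, C * Real.exp (α.re * (t - s)) :=
      norm_integral_le_of_norm_le ((integrableOn_exp_mul_sub_Ioi hα t).const_mul C)
        (ae_of_all _ (norm_cexp_mul_sub_mul_le hb t))
    _ = C / α.re := by rw [integral_const_mul, integral_exp_mul_sub_Ioi hα, div_eq_mul_inv]

lemma expConvIoi_add (α : ℂ) (f : ℝ → ℂ) (t c : ℝ) :
    expConvIoi α f (t + c) = expConvIoi α (fun s => f (s + c)) t := by
  have key := (measurePreserving_add_right volume c).setIntegral_preimage_emb
    (measurableEmbedding_addRight c)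
    (fun s : ℝ => Complex.exp (α * ((t + c : ℝ) - s)) * f s) (Set.Ioi (t + c))
  rw [show (· + c) ⁻¹' Set.Ioi (t + c) = Set.Ioi t by ext; simp] at key
  rw [expConvIoi, expConvIoi, ← key]
  simp only [Complex.ofReal_add, add_sub_add_right_eq_sub]

lemma tendsto_expConvIoi (hα : 0 < α.re) {F : ℕ → ℝ → ℂ} {g : ℝ → ℂ}
    (hFm : ∀ n, AEStronglyMeasurable (F n)) (hFb : ∀ n t, ‖F n t‖ ≤ C)
    (hlim : ∀ t, Tendsto (fun n => F n t) atTop (𝓝 (g t))) (t : ℝ) :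
    Tendsto (fun n => expConvIoi α (F n) t) atTop (𝓝 (expConvIoi α g t)) :=
  (tendsto_integral_of_dominated_convergence _
    (fun n => (aestronglyMeasurable_cexp_mul_sub_mul (hFm n) t).restrict)
    ((integrableOn_exp_mul_sub_Ioi hα t).const_mul C)
    (fun n => ae_of_all _ (norm_cexp_mul_sub_mul_le (hFb n) t))
    (ae_of_all _ fun s => (hlim s).const_mul _)).neg

lemma intervalIntegrable_of_norm_le (hm : AEStronglyMeasurable f) (hb : ∀ t, ‖f t‖ ≤ C)
    (a b : ℝ) : IntervalIntegrable f volume a b :=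
  intervalIntegrable_const.mono_fun' hm.restrict (ae_of_all _ hb)

lemma intervalIntegrable_cexp_mul (hm : AEStronglyMeasurable f) (hb : ∀ t, ‖f t‖ ≤ C)
    (a b : ℝ) :
    IntervalIntegrable (fun s : ℝ => Complex.exp (-α * s) * f s) volume a b :=
  (intervalIntegrable_of_norm_le hm hb a b).continuousOn_mul (by fun_prop)

lemma expConvIoi_eq_cexp_mul (hα : 0 < α.re) (hm : AEStronglyMeasurable f) (hb : ∀ t, ‖f t‖ ≤ C)
    (t : ℝ) :
    expConvIoi α f t = Complex.exp (α * t) * ((∫ s in (0 : ℝ)..t, Complex.exp (-α * s) * f s) -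
      ∫ s in Set.Ioi (0 : ℝ), Complex.exp (-α * s) * f s) := by
  have hk (a : ℝ) : IntegrableOn (fun s : ℝ => Complex.exp (-α * s) * f s) (Set.Ioi a) :=
    IntegrableOn.congr_fun
      ((integrableOn_cexp_mul_sub_mul_Ioi hα hm hb a).const_mul (Complex.exp (-α * a)))
      (fun s _ => by rw [← mul_assoc, ← Complex.exp_add]; ring_nf) measurableSet_Ioi
  rw [← intervalIntegral.integral_Ioi_sub_Ioi' (hk 0) (hk t), sub_sub_cancel_left, mul_neg,
    ← integral_const_mul, expConvIoi]
  congr 1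
  refine setIntegral_congr_fun measurableSet_Ioi fun s _ => ?_
  rw [← mul_assoc, ← Complex.exp_add]
  ring_nf

lemma continuous_expConvIoi (hα : 0 < α.re) (hm : AEStronglyMeasurable f)
    (hb : ∀ t, ‖f t‖ ≤ C) : Continuous (expConvIoi α f) := by
  rw [funext (expConvIoi_eq_cexp_mul hα hm hb)]
  exact (by fun_prop : Continuous fun t : ℝ => Complex.exp (α * t)).mul
    ((intervalIntegral.continuous_primitive (intervalIntegrable_cexp_mul hm hb) 0).sub
      continuous_const)

lemma hasDerivAt_expConvIoi (hα : 0 < α.re) (hm : AEStronglyMeasurable f)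
    (hb : ∀ t, ‖f t‖ ≤ C) {u : ℝ} (hu : ContinuousAt f u) :
    HasDerivAt (expConvIoi α f) (α * expConvIoi α f u + f u) u := by
  have hE : HasDerivAt (fun t : ℝ => Complex.exp (α * t)) (Complex.exp (α * u) * α) u := by
    simpa using ((hasDerivAt_id (u : ℂ)).const_mul α).cexp.comp_ofReal
  have hkm : AEStronglyMeasurable fun s : ℝ => Complex.exp (-α * s) * f s := by fun_prop
  have hP : HasDerivAt (fun t => ∫ s in (0 : ℝ)..t, Complex.exp (-α * s) * f s)
      (Complex.exp (-α * u) * f u) u :=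
    intervalIntegral.integral_hasDerivAt_right (intervalIntegrable_cexp_mul hm hb 0 u)
      hkm.stronglyMeasurableAtFilter
      ((by fun_prop : Continuous fun s : ℝ => Complex.exp (-α * s)).continuousAt.mul hu)
  have hcancel : Complex.exp (α * u) * (Complex.exp (-α * u) * f u) = f u := by
    rw [← mul_assoc, ← Complex.exp_add, neg_mul, add_neg_cancel, Complex.exp_zero, one_mul]
  rw [funext (expConvIoi_eq_cexp_mul hα hm hb)]
  refine (hE.mul (hP.sub_const _)).congr_deriv ?_
  linear_combination hcancel

lemma expConvIoi_eq_add_integral (hα : 0 < α.re) (hm : AEStronglyMeasurable f)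
    (hb : ∀ t, ‖f t‖ ≤ C) {S : Set ℝ} (hS : S.Countable) (hcont : ∀ u ∉ S, ContinuousAt f u)
    (s t : ℝ) :
    expConvIoi α f t = expConvIoi α f s + ∫ u in s..t, (α * expConvIoi α f u + f u) := by
  have hc := continuous_expConvIoi hα hm hb
  rw [integral_eq_of_hasDerivAt_off_countable _ _ hS hc.continuousOn
    (fun u hu => hasDerivAt_expConvIoi hα hm hb (hcont u hu.2))
    (((continuous_const.mul hc).intervalIntegrable s t).add
      (intervalIntegrable_of_norm_le hm hb s t))]
  ring

lemma lipschitzWith_expConvIoi (hα : 0 < α.re) (hm : AEStronglyMeasurable f)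
    (hb : ∀ t, ‖f t‖ ≤ C) {S : Set ℝ} (hS : S.Countable) (hcont : ∀ u ∉ S, ContinuousAt f u) :
    LipschitzWith (‖α‖ * (C / α.re) + C).toNNReal (expConvIoi α f) :=
  LipschitzWith.of_dist_le' fun a b => by
    rw [dist_eq_norm, expConvIoi_eq_add_integral hα hm hb hS hcont b a, add_sub_cancel_left,
      Real.dist_eq]
    refine intervalIntegral.norm_integral_le_of_norm_le_const fun u _ => ?_
    refine (norm_add_le _ _).trans (add_le_add ?_ (hb u))
    rw [norm_mul]
    gcongr
    exact norm_expConvIoi_le hα hb u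

end ExpConvIoi

section AlmostAutomorphy

lemma aestronglyMeasurable_of_continuousAt_off_countable {E : Type*} [TopologicalSpace E]
    [TopologicalSpace.PseudoMetrizableSpace E] {μ : Measure ℝ} [NullSingletonClass μ] {f : ℝ → E}
    {S : Set ℝ} (hS : S.Countable) (hf : ∀ x ∉ S, ContinuousAt f x) :
    AEStronglyMeasurable f μ := by
  have h := (ContinuousOn.aestronglyMeasurable (μ := μ)
    (fun x hx => (hf x hx).continuousWithinAt) hS.measurableSet.compl)
  rwa [Measure.restrict_eq_self_of_ae_mem (hS.ae_notMem μ)] at h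

lemma BddPCc.continuousAt {f : ℝ → ℂ} (hf : BddPCc f) {u : ℝ}
    (hu : u ∉ Set.range ((↑) : ℤ → ℝ)) : ContinuousAt f u := by
  have hopen : IsOpen {t : ℝ | ∀ n : ℤ, t ≠ n} := by
    simpa [Set.compl_def, eq_comm] using Int.isClosedEmbedding_coe_real.isClosed_range.isOpen_compl
  exact hf.2.1.continuousAt (hopen.mem_nhds fun n hn => hu ⟨n, hn.symm⟩)

lemma BddPCc.aestronglyMeasurable {f : ℝ → ℂ} (hf : BddPCc f) : AEStronglyMeasurable f :=
  aestronglyMeasurable_of_continuousAt_off_countable (Set.countable_range _) fun _ =>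
    hf.continuousAt

lemma bddPCc_of_continuous {f : ℝ → ℂ} (hc : Continuous f) (hb : ∃ C, ∀ t, ‖f t‖ ≤ C) :
    BddPCc f :=
  ⟨hb, hc.continuousOn, fun n => ⟨⟨f n, hc.continuousAt.tendsto.mono_left nhdsWithin_le_nhds⟩,
    ⟨f n, hc.continuousAt.tendsto.mono_left nhdsWithin_le_nhds⟩⟩⟩

lemma zAlmostAutomorphicC_expConvIoi {α : ℂ} (hα : 0 < α.re) {f : ℝ → ℂ}
    (hf : ZAlmostAutomorphicC f) : ZAlmostAutomorphicC (expConvIoi α f) := by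
  have hm := hf.1.aestronglyMeasurable
  obtain ⟨⟨⟨C, hb⟩, -⟩, hZ⟩ := hf
  refine ⟨bddPCc_of_continuous (continuous_expConvIoi hα hm hb)
    ⟨C / α.re, norm_expConvIoi_le hα hb⟩, fun m => ?_⟩
  obtain ⟨φ, g, hφ, hfg, hgf⟩ := hZ m
  have hshift {h : ℝ → ℂ} (hh : AEStronglyMeasurable h) (c : ℝ) :
      AEStronglyMeasurable (fun s => h (s + c)) :=
    hh.comp_measurePreserving (measurePreserving_add_right volume c)
  have hgm : AEStronglyMeasurable g :=
    aestronglyMeasurable_of_tendsto_ae atTop (fun n => hshift hm _) (ae_of_all _ hfg)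
  have hgb (t : ℝ) : ‖g t‖ ≤ C := le_of_tendsto' (hfg t).norm fun n => hb _
  refine ⟨φ, expConvIoi α g, hφ, fun t => ?_, fun t => ?_⟩
  · simp_rw [expConvIoi_add]
    exact tendsto_expConvIoi hα (fun n => hshift hm _) (fun n s => hb _) hfg t
  · simp_rw [sub_eq_add_neg, expConvIoi_add, ← sub_eq_add_neg]
    exact tendsto_expConvIoi hα (fun n => hshift hgm _) (fun n s => hgb _) hgf t

lemma LipschitzWith.tendsto_comp_add {ι β : Type*} [PseudoMetricSpace β] {l : Filter ι}
    {K : NNReal} {F : ℝ → β} (hF : LipschitzWith K F) {a u : ι → ℝ} {L : β}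
    (ha : Tendsto (fun n => F (a n)) l (𝓝 L))
    (hu : Tendsto u l (𝓝 0)) : Tendsto (fun n => F (a n + u n)) l (𝓝 L) := by
  refine ha.congr_dist (squeeze_zero (fun n => dist_nonneg) (fun n => hF.dist_le_mul _ _) ?_)
  simpa [Real.dist_eq] using (hu.abs.const_mul (K : ℝ))

lemma ZAlmostAutomorphicC.almostAutomorphicC_of_lipschitzWith {K : NNReal} {F : ℝ → ℂ}
    (hF : ZAlmostAutomorphicC F) (hL : LipschitzWith K F) : AlmostAutomorphicC F := by
  refine ⟨hF.1.1, hL.continuous, fun s => ?_⟩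
  obtain ⟨φ₁, g, hφ₁, hFg, hgF⟩ := hF.2 fun n => ⌊s n⌋
  have hgL : LipschitzWith K g := LipschitzWith.of_dist_le_mul fun a b =>
    le_of_tendsto' ((hFg a).dist (hFg b)) fun n =>
      (hL.dist_le_mul _ _).trans_eq (by rw [dist_add_right])
  obtain ⟨r, -, φ₂, hφ₂, hr⟩ := isCompact_Icc.tendsto_subseq
    (fun n => ⟨Int.fract_nonneg _, (Int.fract_lt_one _).le⟩ :
      ∀ n, Int.fract (s (φ₁ n)) ∈ Set.Icc (0 : ℝ) 1)
  refine ⟨φ₁ ∘ φ₂, fun t => g (t + r), hφ₁.comp hφ₂, fun t => ?_, fun t => ?_⟩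
  · convert hL.tendsto_comp_add ((hFg (t + r)).comp hφ₂.tendsto_atTop)
      (u := fun n => Int.fract (s (φ₁ (φ₂ n))) - r) (by simpa using hr.sub_const r)
      using 3 with n
    simp only [Function.comp_apply, Int.fract]
    ring
  · convert hgL.tendsto_comp_add ((hgF t).comp hφ₂.tendsto_atTop)
      (u := fun n => r - Int.fract (s (φ₁ (φ₂ n)))) (by simpa using hr.const_sub r)
      using 3 with n
    simp only [Function.comp_apply, Int.fract]
    ring

end AlmostAutomorphy

section Uniqueness

variable {α : ℂ}

lemma hasDerivAt_of_eq_add_integral {E : Type*} [NormedAddCommGroup E] [NormedSpace ℝ E]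
    [CompleteSpace E] {z g : ℝ → E} (hg : Continuous g)
    (h : ∀ s t, s ≤ t → z t = z s + ∫ u in s..t, g u) (t : ℝ) : HasDerivAt z (g t) t := by
  refine ((hg.integral_hasStrictDerivAt (t - 1) t).hasDerivAt.const_add
    (z (t - 1))).congr_of_eventuallyEq ?_
  filter_upwards [Ioi_mem_nhds (sub_one_lt t)] with x hx using h _ _ (le_of_lt hx)

lemma eq_cexp_mul_of_hasDerivAt {z : ℝ → ℂ} (hz : ∀ t, HasDerivAt z (α * z t) t) (t : ℝ) :
    z t = Complex.exp (α * t) * z 0 := by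
  have hw (x : ℝ) : HasDerivAt (fun t : ℝ => Complex.exp (-α * t) * z t) 0 x := by
    have hE : HasDerivAt (fun t : ℝ => Complex.exp (-α * t)) (Complex.exp (-α * x) * -α) x := by
      simpa using ((hasDerivAt_id (x : ℂ)).const_mul (-α)).cexp.comp_ofReal
    exact (hE.mul (hz x)).congr_deriv (by ring)
  have hconst := is_const_of_deriv_eq_zero (fun x => (hw x).differentiableAt)
    (fun x => (hw x).deriv) t 0
  simp only [Complex.ofReal_zero, mul_zero, Complex.exp_zero, one_mul] at hconst
  rw [← hconst, ← mul_assoc, ← Complex.exp_add, ← add_mul, add_neg_cancel, zero_mul,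
    Complex.exp_zero, one_mul]

lemma eq_zero_of_hasDerivAt_of_bounded (hα : 0 < α.re) {z : ℝ → ℂ}
    (hz : ∀ t, HasDerivAt z (α * z t) t) {M : ℝ} (hM : ∀ t, ‖z t‖ ≤ M) : z = 0 := by
  have hz0 : z 0 = 0 := by
    by_contra h0
    have htend : Tendsto (fun t : ℝ => Real.exp (α.re * t) * ‖z 0‖) atTop atTop :=
      (Real.tendsto_exp_atTop.comp (tendsto_id.const_mul_atTop hα)).atTop_mul_const
        (norm_pos_iff.2 h0)
    obtain ⟨t, ht⟩ := (htend.eventually_gt_atTop M).exists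
    have := hM t
    rw [eq_cexp_mul_of_hasDerivAt hz t, norm_mul, Complex.norm_exp, Complex.re_mul_ofReal] at this
    linarith
  funext t
  rw [eq_cexp_mul_of_hasDerivAt hz t, hz0, mul_zero, Pi.zero_apply]

lemma eq_expConvIoi_of_eq_add_integral (hα : 0 < α.re) {f : ℝ → ℂ} {C : ℝ}
    (hm : AEStronglyMeasurable f) (hb : ∀ t, ‖f t‖ ≤ C) {S : Set ℝ} (hS : S.Countable)
    (hcont : ∀ u ∉ S, ContinuousAt f u) {y : ℝ → ℂ} (hyc : Continuous y) {M : ℝ}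
    (hyb : ∀ t, ‖y t‖ ≤ M)
    (hy : ∀ s t, s ≤ t → y t = y s + ∫ u in s..t, (α * y u + f u)) :
    y = expConvIoi α f := by
  have hxc := continuous_expConvIoi hα hm hb
  have hderiv : ∀ t, HasDerivAt (y - expConvIoi α f) (α * (y - expConvIoi α f) t) t := by
    refine hasDerivAt_of_eq_add_integral (by fun_prop) fun s t hst => ?_
    have hfi := intervalIntegrable_of_norm_le hm hb s t
    have hyi : IntervalIntegrable (fun u => α * y u + f u) volume s t :=
      ((by fun_prop : Continuous fun u => α * y u).intervalIntegrable s t).add hfi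
    have hxi : IntervalIntegrable (fun u => α * expConvIoi α f u + f u) volume s t :=
      ((by fun_prop : Continuous fun u => α * expConvIoi α f u).intervalIntegrable s t).add hfi
    rw [Pi.sub_apply, Pi.sub_apply, hy s t hst, expConvIoi_eq_add_integral hα hm hb hS hcont s t,
      add_sub_add_comm, ← intervalIntegral.integral_sub hyi hxi]
    congr 1
    refine intervalIntegral.integral_congr fun u _ => ?_
    simp only [Pi.sub_apply]
    ring
  exact sub_eq_zero.1 (eq_zero_of_hasDerivAt_of_bounded hα hderiv fun t =>
    (norm_sub_le _ _).trans (add_le_add (hyb t) (norm_expConvIoi_le hα hb t)))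

end Uniqueness

/-- For `Re α > 0` and `f` `ℤ`-almost automorphic, `x₂(t) = -∫_t^{+∞} e^{α(t-s)} f(s) ds`
is well defined and is the unique almost automorphic solution of `x' = α x + f`
(understood in the integrated sense). -/
theorem unique_aa_solution_re_pos (α : ℂ) (hα : 0 < α.re)
    (f : ℝ → ℂ) (hf : ZAlmostAutomorphicC f) :
    (∀ t : ℝ, IntegrableOn (fun s : ℝ => Complex.exp (α * (t - s)) * f s) (Set.Ioi t)) ∧
    AlmostAutomorphicC (fun t : ℝ => -∫ s in Set.Ioi t, Complex.exp (α * (t - s)) * f s) ∧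
    (∀ s t : ℝ, s ≤ t →
      (-∫ u in Set.Ioi t, Complex.exp (α * (t - u)) * f u) =
        (-∫ u in Set.Ioi s, Complex.exp (α * (s - u)) * f u) +
          ∫ u in s..t,
            (α * (-∫ r in Set.Ioi u, Complex.exp (α * (u - r)) * f r) + f u)) ∧
    (∀ y : ℝ → ℂ, AlmostAutomorphicC y →
      (∀ s t : ℝ, s ≤ t → y t = y s + ∫ u in s..t, (α * y u + f u)) →
      y = fun t : ℝ => -∫ s in Set.Ioi t, Complex.exp (α * (t - s)) * f s) := by
  have hm := hf.1.aestronglyMeasurable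
  obtain ⟨C, hb⟩ := hf.1.1
  have hS : (Set.range ((↑) : ℤ → ℝ)).Countable := Set.countable_range _
  have hcont : ∀ u ∉ Set.range ((↑) : ℤ → ℝ), ContinuousAt f u := fun _ => hf.1.continuousAt
  refine ⟨integrableOn_cexp_mul_sub_mul_Ioi hα hm hb,
    (zAlmostAutomorphicC_expConvIoi hα hf).almostAutomorphicC_of_lipschitzWith
      (lipschitzWith_expConvIoi hα hm hb hS hcont),
    fun s t _ => expConvIoi_eq_add_integral hα hm hb hS hcont s t, fun y hy hsol => ?_⟩
  obtain ⟨⟨M, hM⟩, hyc, -⟩ := hy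
  exact eq_expConvIoi_of_eq_add_integral hα hm hb hS hcont hyc hM hsol
end
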